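/- arXiv:1906.06682 — 3 statements merged into one kernel-verified Lean document; each statement's English description precedes it below -/
import Mathlib

section
/- If a symmetric real n×n matrix W has all eigenvalues in the cone Γ₂ (σ₁ > 0 and σ₂ > 0 on the eigenvalues), then the matrix of partial derivatives (∂σ₂/∂W_{ij})(W) is positive definite. -/
open Finset

/-- k-th elementary symmetric polynomial of lam : Fin n → ℝ. -/
noncomputable def esym (n k : ℕ) (lam : Fin n → ℝ) : ℝ :=
  ∑ s ∈ Finset.univ.powersetCard k, ∏ i ∈ s, lam i

/-- The Garding cone Γ₂. -/
def GammaTwo (n : ℕ) (lam : Fin n → ℝ) : Prop :=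
  0 < esym n 1 lam ∧ 0 < esym n 2 lam

lemma esym_one_eq (n : ℕ) (lam : Fin n → ℝ) : esym n 1 lam = ∑ i, lam i := by
  simp [esym, Finset.powersetCard_one, Finset.sum_map]

lemma sq_sum_aux {n : ℕ} (lam : Fin n → ℝ) (s : Finset (Fin n)) :
    (∑ i ∈ s, lam i) ^ 2 =
      ∑ i ∈ s, (lam i) ^ 2 + 2 * ∑ t ∈ s.powersetCard 2, ∏ i ∈ t, lam i := by
  induction s using Finset.induction with
  | empty =>
    have h0 : (∅ : Finset (Fin n)).powersetCard 2 = ∅ :=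
      Finset.powersetCard_eq_empty.mpr (by simp)
    simp [h0]
  | @insert x s hx ih =>
    have hps : Finset.powersetCard 2 (insert x s) =
        Finset.powersetCard 2 s ∪ (Finset.powersetCard 1 s).image (insert x) :=
      Finset.powersetCard_succ_insert hx 1
    have hdisj : Disjoint (Finset.powersetCard 2 s)
        ((Finset.powersetCard 1 s).image (insert x)) := by
      rw [Finset.disjoint_left]
      intro t ht ht'
      obtain ⟨u, hu, rfl⟩ := Finset.mem_image.mp ht'
      have := (Finset.mem_powersetCard.mp ht).1
      exact hx (this (Finset.mem_insert_self x u))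
    have himg : ∑ t ∈ (Finset.powersetCard 1 s).image (insert x), ∏ i ∈ t, lam i
        = lam x * ∑ i ∈ s, lam i := by
      rw [Finset.sum_image]
      · rw [Finset.powersetCard_one, Finset.sum_map, Finset.mul_sum]
        refine Finset.sum_congr rfl fun i hi => ?_
        have hxi : x ∉ ({i} : Finset (Fin n)) := by
          simp only [Finset.mem_singleton]
          rintro rfl; exact hx hi
        simp [Finset.prod_insert hxi]
      · intro t1 h1 t2 h2 h
        have hx1 : x ∉ t1 := fun hmem =>
          hx ((Finset.mem_powersetCard.mp h1).1 hmem)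
        have hx2 : x ∉ t2 := fun hmem =>
          hx ((Finset.mem_powersetCard.mp h2).1 hmem)
        have := congrArg (Finset.erase · x) h
        simpa [Finset.erase_insert_of_ne, Finset.erase_insert hx1,
          Finset.erase_insert hx2] using this
    rw [Finset.sum_insert hx, Finset.sum_insert hx, hps, Finset.sum_union hdisj, himg]
    ring_nf
    nlinarith [ih]

lemma lt_of_gammaTwo {n : ℕ} (lam : Fin n → ℝ) (h1 : 0 < esym n 1 lam)
    (h2 : 0 < esym n 2 lam) (i : Fin n) : lam i < ∑ j, lam j := by
  have key := sq_sum_aux lam Finset.univ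
  have hsum : esym n 2 lam = ∑ t ∈ Finset.univ.powersetCard 2, ∏ i ∈ t, lam i := rfl
  have hs1 : (0:ℝ) < ∑ j, lam j := by rwa [esym_one_eq] at h1
  have hle : (lam i) ^ 2 ≤ ∑ j, (lam j) ^ 2 :=
    Finset.single_le_sum (fun j _ => sq_nonneg (lam j)) (Finset.mem_univ i)
  have hlt : (lam i) ^ 2 < (∑ j, lam j) ^ 2 := by
    rw [hsum] at h2; nlinarith
  nlinarith [hlt, hs1]

theorem sigma2_derivative_posDef {n : ℕ} (W : Matrix (Fin n) (Fin n) ℝ)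
    (hW : W.IsHermitian) (h1 : 0 < esym n 1 hW.eigenvalues)
    (h2 : 0 < esym n 2 hW.eigenvalues) :
    (Matrix.trace W • (1 : Matrix (Fin n) (Fin n) ℝ) - W).PosDef := by
  classical
  set U : Matrix (Fin n) (Fin n) ℝ := (hW.eigenvectorUnitary : Matrix (Fin n) (Fin n) ℝ)
  have hUU : star U * U = 1 := Matrix.mem_unitaryGroup_iff'.mp hW.eigenvectorUnitary.2
  have hUU' : U * star U = 1 := Matrix.mem_unitaryGroup_iff.mp hW.eigenvectorUnitary.2
  have hspec : W = U * Matrix.diagonal hW.eigenvalues * star U := by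
    have := hW.spectral_theorem
    simpa using this
  have htrace : Matrix.trace W = ∑ i, hW.eigenvalues i := by
    have h' := congrArg Matrix.trace hspec
    rw [h', Matrix.trace_mul_cycle, hUU, one_mul, Matrix.trace_diagonal]
  set c : ℝ := ∑ i, hW.eigenvalues i
  have hpos : ∀ i, 0 < c - hW.eigenvalues i := fun i =>
    sub_pos.mpr (lt_of_gammaTwo hW.eigenvalues h1 h2 i)
  have hM : Matrix.trace W • (1 : Matrix (Fin n) (Fin n) ℝ) - W
      = U * Matrix.diagonal (fun i => c - hW.eigenvalues i) * star U := by
    have h1' : Matrix.diagonal (fun i => c - hW.eigenvalues i)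
        = c • (1 : Matrix (Fin n) (Fin n) ℝ) - Matrix.diagonal hW.eigenvalues := by
      ext i j
      rcases eq_or_ne i j with rfl | hij
      · simp [Matrix.one_apply_eq]
      · simp [Matrix.diagonal_apply_ne _ hij, Matrix.one_apply_ne hij]
    rw [htrace, h1', mul_sub, sub_mul, ← hspec]
    congr 1
    rw [Matrix.mul_smul, mul_one, Matrix.smul_mul, hUU']
  rw [hM]
  have hD : (Matrix.diagonal (fun i => c - hW.eigenvalues i)).PosDef :=
    Matrix.PosDef.diagonal hpos
  rw [Matrix.posDef_iff_dotProduct_mulVec]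
  constructor
  · have := Matrix.isHermitian_mul_mul_conjTranspose U hD.isHermitian
    simpa [Matrix.star_eq_conjTranspose] using this
  · intro x hx
    set y : Fin n → ℝ := Matrix.mulVec (star U) x with hy
    have hyne : y ≠ 0 := by
      intro h0
      apply hx
      have : Matrix.mulVec U (Matrix.mulVec (star U) x) = x := by
        rw [Matrix.mulVec_mulVec, hUU', Matrix.one_mulVec]
      rw [← this, ← hy, h0, Matrix.mulVec_zero]
    have hrw : dotProduct (star x)
          (Matrix.mulVec (U * Matrix.diagonal (fun i => c - hW.eigenvalues i) * star U) x)
        = dotProduct (star y)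
          (Matrix.mulVec (Matrix.diagonal (fun i => c - hW.eigenvalues i)) y) := by
      rw [← Matrix.mulVec_mulVec, ← Matrix.mulVec_mulVec, Matrix.dotProduct_mulVec (star x)]
      have hh : Matrix.vecMul (star x) U = star y := by
        rw [hy, Matrix.star_mulVec]
        simp [Matrix.star_eq_conjTranspose]
      rw [hh, hy]
    rw [hrw]
    exact hD.dotProduct_mulVec_pos hyne
end

section
/- Let W be a diagonal n×n matrix with entries W₁₁ ≥ W₂₂ ≥ … ≥ W_{nn} whose diagonal lies in Γ₂. If ξ is a symmetric n×n matrix and η is a real number satisfying Σᵢ σ₂^{ii}(W) ξ_{ii} = η, then −Σ_{i≠j} ξ_{ii} ξ_{jj} ≥ ((n−1)/(2σ₂(W))) · (2σ₂(W) ξ₁₁ − W₁₁ η)² / ((n−1)W₁₁² + 2(n−2)σ₂(W)) − η²/(2σ₂(W)). -/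
open Finset

lemma sum_powersetCard_one' {α : Type*} [DecidableEq α] (s : Finset α) (f : α → ℝ) :
    ∑ t ∈ s.powersetCard 1, ∏ i ∈ t, f i = ∑ i ∈ s, f i := by
  rw [Finset.powersetCard_one, Finset.sum_map]
  simp

lemma sum_powersetCard_two' {α : Type*} [DecidableEq α] (s : Finset α) (f : α → ℝ) :
    2 * ∑ t ∈ s.powersetCard 2, ∏ i ∈ t, f i = (∑ i ∈ s, f i) ^ 2 - ∑ i ∈ s, (f i) ^ 2 := by
  induction s using Finset.induction_on with
  | empty =>
      rw [show (∅ : Finset α).powersetCard 2 = ∅ from Finset.powersetCard_eq_empty.2 (by simp)]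
      simp
  | @insert x s hx ih =>
      rw [show ((insert x s).powersetCard 2)
            = s.powersetCard 2 ∪ (s.powersetCard 1).image (insert x) from
          Finset.powersetCard_succ_insert hx 1]
      have hdisj : Disjoint (s.powersetCard 2) ((s.powersetCard 1).image (insert x)) := by
        rw [Finset.disjoint_right]
        intro t ht ht2
        obtain ⟨u, _, rfl⟩ := Finset.mem_image.1 ht
        have hsub : insert x u ⊆ s := (Finset.mem_powersetCard.1 ht2).1
        exact hx (hsub (Finset.mem_insert_self x u))
      have hinj : ∀ u ∈ s.powersetCard 1, ∀ v ∈ s.powersetCard 1,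
          insert x u = insert x v → u = v := by
        intro u hu v hv huv
        have hxu : x ∉ u := fun h => hx ((Finset.mem_powersetCard.1 hu).1 h)
        have hxv : x ∉ v := fun h => hx ((Finset.mem_powersetCard.1 hv).1 h)
        rw [← Finset.erase_insert hxu, ← Finset.erase_insert hxv, huv]
      rw [Finset.sum_union hdisj, Finset.sum_image hinj]
      have hins : ∀ t ∈ s.powersetCard 1, ∏ i ∈ insert x t, f i = f x * ∏ i ∈ t, f i := by
        intro t ht
        have hts : t ⊆ s := (Finset.mem_powersetCard.1 ht).1
        exact Finset.prod_insert (fun hxt => hx (hts hxt))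
      rw [Finset.sum_congr rfl hins, ← Finset.mul_sum, sum_powersetCard_one',
        Finset.sum_insert hx, Finset.sum_insert hx]
      linear_combination ih

set_option maxHeartbeats 2000000 in
theorem chen_qiu_lemma {n : ℕ} (hn : 1 ≤ n) (lam : Fin n → ℝ) (hord : Antitone lam)
    (hG : GammaTwo n lam) (ξ : Matrix (Fin n) (Fin n) ℝ) (hsym : ξ.IsSymm) (η : ℝ)
    (heq : ∑ i, (esym n 1 lam - lam i) * ξ i i = η) :
    -(∑ i, ∑ j ∈ Finset.univ.erase i, ξ i i * ξ j j) ≥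
      ((n : ℝ) - 1) / (2 * esym n 2 lam) *
        ((2 * esym n 2 lam * ξ ⟨0, hn⟩ ⟨0, hn⟩ - lam ⟨0, hn⟩ * η) ^ 2 /
          (((n : ℝ) - 1) * lam ⟨0, hn⟩ ^ 2 + 2 * ((n : ℝ) - 2) * esym n 2 lam)) -
      η ^ 2 / (2 * esym n 2 lam) := by
  classical
  obtain ⟨h1, h2⟩ := hG
  set i0 : Fin n := ⟨0, hn⟩ with hi0
  set ν : ℝ := (n : ℝ) with hν
  set s : ℝ := ∑ i, lam i with hs
  set p : ℝ := esym n 2 lam with hp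
  set l : ℝ := lam i0 with hl
  set b : ℝ := ξ i0 i0 with hb
  set T : ℝ := ∑ i ∈ Finset.univ.erase i0, ξ i i with hT
  set B : ℝ := ∑ i ∈ Finset.univ.erase i0, ξ i i ^ 2 with hB
  set C : ℝ := ∑ i ∈ Finset.univ.erase i0, (s - lam i) * ξ i i with hC
  set ω : ℝ := (ν - 2) * s + l with homega
  set W2 : ℝ := (ν - 1) * s ^ 2 - 2 * p - (s - l) ^ 2 with hW2v
  set D : ℝ := (ν - 1) * l ^ 2 + 2 * (ν - 2) * p with hDv
  set Δ : ℝ := (ν - 1) * W2 - ω ^ 2 with hDel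
  set E : ℝ := W2 * T - ω * C with hEv
  -- basic facts
  have hn2 : 2 ≤ n := by
    rcases Nat.lt_or_ge n 2 with h | h
    · exfalso
      have hz : esym n 2 lam = 0 := by
        unfold esym
        rw [Finset.powersetCard_eq_empty.2 (by simpa using h)]
        exact Finset.sum_empty
      rw [← hp] at hz
      linarith
    · exact h
  have hν2 : (2 : ℝ) ≤ ν := by rw [hν]; exact_mod_cast hn2
  have hppos : 0 < p := h2
  have hs1 : esym n 1 lam = s := by
    rw [hs]
    exact sum_powersetCard_one' _ lam
  have hspos : 0 < s := by rwa [hs1] at h1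
  have hp2 : 2 * p = s ^ 2 - ∑ i, (lam i) ^ 2 := by
    rw [hp, hs]
    exact sum_powersetCard_two' _ lam
  have hcard : (Finset.univ.erase i0).card = n - 1 := by
    rw [Finset.card_erase_of_mem (Finset.mem_univ _), Finset.card_univ, Fintype.card_fin]
  have hcardR : ((Finset.univ.erase i0).card : ℝ) = ν - 1 := by
    rw [hcard, Nat.cast_sub hn, hν]; simp
  -- positivity of s - lam i
  have hcpos : ∀ i, 0 < s - lam i := by
    intro i
    by_contra hcon
    push_neg at hcon
    have h1' : s ≤ lam i := by linarith
    have h2' : s ^ 2 ≤ (lam i) ^ 2 := pow_le_pow_left₀ hspos.le h1' 2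
    have h3' : (lam i) ^ 2 ≤ ∑ j, (lam j) ^ 2 :=
      Finset.single_le_sum (fun j _ => sq_nonneg (lam j)) (Finset.mem_univ i)
    linarith
  -- l is positive
  have hlmax : ∀ i, lam i ≤ l := by
    intro i
    rw [hl]
    exact hord (by simp [hi0, Fin.le_def])
  have hsl : s ≤ ν * l := by
    rw [hs]
    calc ∑ i, lam i ≤ ∑ _i : Fin n, l := Finset.sum_le_sum (fun i _ => hlmax i)
      _ = ν * l := by
          rw [Finset.sum_const, nsmul_eq_mul, Finset.card_univ, Fintype.card_fin, hν]
  have hlpos : 0 < l := by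
    by_contra hcon
    push_neg at hcon
    have hνl : ν * l ≤ 0 := mul_nonpos_iff.2 (Or.inl ⟨by linarith, hcon⟩)
    linarith
  have hDpos : 0 < D := by
    rw [hDv]
    linarith [mul_nonneg (by linarith : (0:ℝ) ≤ ν - 2) (sq_nonneg l),
      mul_nonneg (by linarith : (0:ℝ) ≤ ν - 2) hppos.le, mul_pos hlpos hlpos]
  -- splitting sums at i0
  have hlame : ∑ i ∈ Finset.univ.erase i0, lam i = s - l := by
    have h := Finset.sum_erase_add Finset.univ lam (Finset.mem_univ i0)
    rw [← hs, ← hl] at h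
    linarith
  have hlam2e : ∑ i ∈ Finset.univ.erase i0, (lam i) ^ 2 = s ^ 2 - 2 * p - l ^ 2 := by
    have h : ∑ i ∈ Finset.univ.erase i0, lam i ^ 2 + lam i0 ^ 2 = ∑ i, lam i ^ 2 :=
      Finset.sum_erase_add _ _ (Finset.mem_univ i0)
    rw [← hl] at h
    linarith
  have homs : ∑ i ∈ Finset.univ.erase i0, (s - lam i) = ω := by
    rw [Finset.sum_sub_distrib, Finset.sum_const, nsmul_eq_mul, hcardR, hlame, homega]
    ring
  have hW2s : ∑ i ∈ Finset.univ.erase i0, (s - lam i) ^ 2 = W2 := by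
    have expand : ∀ i ∈ Finset.univ.erase i0,
        (s - lam i) ^ 2 = (s ^ 2 - (2 * s) * lam i) + (lam i) ^ 2 := fun i _ => by ring
    rw [Finset.sum_congr rfl expand, Finset.sum_add_distrib, Finset.sum_sub_distrib,
      Finset.sum_const, nsmul_eq_mul, ← Finset.mul_sum, hcardR, hlame, hlam2e, hW2v]
    ring
  have hW2pos : 0 < W2 := by
    rw [← hW2s]
    apply Finset.sum_pos (fun i _ => pow_pos (hcpos i) 2)
    apply Finset.card_pos.mp
    rw [hcard]
    omega
  -- Cauchy-Schwarz inequalities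
  have hC2 : C ^ 2 ≤ W2 * B := by
    have hcs : (∑ i ∈ Finset.univ.erase i0, (s - lam i) * ξ i i) ^ 2 ≤
        (∑ i ∈ Finset.univ.erase i0, (s - lam i) ^ 2) *
          ∑ i ∈ Finset.univ.erase i0, (ξ i i) ^ 2 :=
      Finset.sum_mul_sq_le_sq_mul_sq _ _ _
    rw [hW2s, ← hC, ← hB] at hcs
    exact hcs
  have hΔnn : 0 ≤ Δ := by
    have hcs : (∑ i ∈ Finset.univ.erase i0, (s - lam i) * (1:ℝ)) ^ 2 ≤
        (∑ i ∈ Finset.univ.erase i0, (s - lam i) ^ 2) *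
          ∑ _i ∈ Finset.univ.erase i0, (1:ℝ) ^ 2 :=
      Finset.sum_mul_sq_le_sq_mul_sq _ _ _
    simp only [mul_one, one_pow, Finset.sum_const, nsmul_eq_mul] at hcs
    rw [homs, hW2s, hcardR] at hcs
    rw [hDel]
    linarith [hcs]
  have hfg : ∑ i ∈ Finset.univ.erase i0,
      (W2 - ω * (s - lam i)) * (W2 * ξ i i - C * (s - lam i)) = W2 * E := by
    have expand : ∀ i ∈ Finset.univ.erase i0,
        (W2 - ω * (s - lam i)) * (W2 * ξ i i - C * (s - lam i)) =
          (((W2 * W2) * ξ i i - (W2 * C) * (s - lam i)) -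
            (ω * W2) * ((s - lam i) * ξ i i)) + (ω * C) * (s - lam i) ^ 2 :=
      fun i _ => by ring
    rw [Finset.sum_congr rfl expand, Finset.sum_add_distrib, Finset.sum_sub_distrib,
      Finset.sum_sub_distrib, ← Finset.mul_sum, ← Finset.mul_sum, ← Finset.mul_sum,
      ← Finset.mul_sum, homs, hW2s, ← hT, ← hC, hEv]
    ring
  have hff : ∑ i ∈ Finset.univ.erase i0, (W2 - ω * (s - lam i)) ^ 2 = W2 * Δ := by
    have expand : ∀ i ∈ Finset.univ.erase i0,
        (W2 - ω * (s - lam i)) ^ 2 =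
          (W2 ^ 2 - (2 * W2 * ω) * (s - lam i)) + (ω ^ 2) * (s - lam i) ^ 2 :=
      fun i _ => by ring
    rw [Finset.sum_congr rfl expand, Finset.sum_add_distrib, Finset.sum_sub_distrib,
      Finset.sum_const, nsmul_eq_mul, ← Finset.mul_sum, ← Finset.mul_sum, homs, hW2s,
      hcardR, hDel]
    ring
  have hgg : ∑ i ∈ Finset.univ.erase i0, (W2 * ξ i i - C * (s - lam i)) ^ 2 =
      W2 * (W2 * B - C ^ 2) := by
    have expand : ∀ i ∈ Finset.univ.erase i0,
        (W2 * ξ i i - C * (s - lam i)) ^ 2 =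
          (W2 ^ 2 * (ξ i i ^ 2) - (2 * W2 * C) * ((s - lam i) * ξ i i)) +
            (C ^ 2) * (s - lam i) ^ 2 :=
      fun i _ => by ring
    rw [Finset.sum_congr rfl expand, Finset.sum_add_distrib, Finset.sum_sub_distrib,
      ← Finset.mul_sum, ← Finset.mul_sum, ← Finset.mul_sum, hW2s, ← hB, ← hC]
    ring
  have hE2 : E ^ 2 ≤ Δ * (W2 * B - C ^ 2) := by
    have hcs : (∑ i ∈ Finset.univ.erase i0,
        (W2 - ω * (s - lam i)) * (W2 * ξ i i - C * (s - lam i))) ^ 2 ≤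
        (∑ i ∈ Finset.univ.erase i0, (W2 - ω * (s - lam i)) ^ 2) *
          ∑ i ∈ Finset.univ.erase i0, (W2 * ξ i i - C * (s - lam i)) ^ 2 :=
      Finset.sum_mul_sq_le_sq_mul_sq _ _ _
    rw [hfg, hff, hgg] at hcs
    have h1' : W2 ^ 2 * E ^ 2 ≤ W2 ^ 2 * (Δ * (W2 * B - C ^ 2)) := by linarith [hcs]
    exact le_of_mul_le_mul_left h1' (by positivity)
  -- the constraint
  have hη' : (s - l) * b + C = η := by
    rw [hs1] at heq
    have h : ∑ i ∈ Finset.univ.erase i0, (s - lam i) * ξ i i + (s - lam i0) * ξ i0 i0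
        = ∑ i, (s - lam i) * ξ i i := Finset.sum_erase_add _ _ (Finset.mem_univ i0)
    rw [← hC, ← hl, ← hb] at h
    linarith
  -- sum decompositions
  have hS : ∑ i, ξ i i = b + T := by
    have h : ∑ i ∈ Finset.univ.erase i0, ξ i i + ξ i0 i0 = ∑ i, ξ i i :=
      Finset.sum_erase_add _ _ (Finset.mem_univ i0)
    rw [← hT, ← hb] at h
    linarith
  have hQ : ∑ i, ξ i i ^ 2 = b ^ 2 + B := by
    have h : ∑ i ∈ Finset.univ.erase i0, ξ i i ^ 2 + ξ i0 i0 ^ 2 = ∑ i, ξ i i ^ 2 :=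
      Finset.sum_erase_add _ _ (Finset.mem_univ i0)
    rw [← hB, ← hb] at h
    linarith
  have hds : ∑ i, ∑ j ∈ Finset.univ.erase i, ξ i i * ξ j j = (b + T) ^ 2 - (b ^ 2 + B) := by
    have inner : ∀ i ∈ (Finset.univ : Finset (Fin n)),
        ∑ j ∈ Finset.univ.erase i, ξ i i * ξ j j = ξ i i * (b + T) - ξ i i ^ 2 := by
      intro i _
      rw [← Finset.mul_sum]
      have h : ∑ j ∈ Finset.univ.erase i, ξ j j + ξ i i = ∑ j, ξ j j :=
        Finset.sum_erase_add _ _ (Finset.mem_univ i)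
      rw [hS] at h
      have h' : ∑ j ∈ Finset.univ.erase i, ξ j j = b + T - ξ i i := by linarith
      rw [h']
      ring
    rw [Finset.sum_congr rfl inner, Finset.sum_sub_distrib, ← Finset.sum_mul, hS, hQ]
    ring
  -- the key nonnegativity
  set H : ℝ := 2 * p * D * (b ^ 2 + B - (b + T) ^ 2) + D * ((s - l) * b + C) ^ 2 -
      (ν - 1) * (2 * p * b - l * ((s - l) * b + C)) ^ 2 with hHv
  have hΔD : Δ = W2 - D := by
    rw [hDel, hW2v, hDv, homega]
    ring
  have hHnn : 0 ≤ H := by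
    rcases hΔnn.lt_or_eq with hΔpos | hΔ0
    · -- nondegenerate case
      have id1 : W2 * Δ * H = 2 * p * W2 * (Δ * b + ω * C - D * T) ^ 2 +
          2 * p * D * (Δ * (W2 * B - C ^ 2) - E ^ 2) := by
        rw [hHv, hDel, hEv, hW2v, hDv, homega]
        ring
      have hsl1 : 0 ≤ Δ * (W2 * B - C ^ 2) - E ^ 2 := by linarith
      have h0 : 0 ≤ W2 * Δ * H := by
        rw [id1]
        have ha1 : 0 ≤ 2 * p * W2 * (Δ * b + ω * C - D * T) ^ 2 := by positivity
        have ha2 : 0 ≤ 2 * p * D * (Δ * (W2 * B - C ^ 2) - E ^ 2) := by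
          apply mul_nonneg (by positivity) hsl1
        linarith
      have h0' : (W2 * Δ) * 0 ≤ W2 * Δ * H := by rw [mul_zero]; linarith
      linarith [le_of_mul_le_mul_left h0' (mul_pos hW2pos hΔpos)]
    · -- degenerate case Δ = 0
      have hE0 : E = 0 := by
        have h1' : E ^ 2 ≤ 0 := by
          rw [← hΔ0] at hE2
          simpa using hE2
        have h2' : E ^ 2 = 0 := le_antisymm h1' (sq_nonneg E)
        exact pow_eq_zero_iff two_ne_zero |>.1 h2'
      have id2 : W2 ^ 2 * H = 2 * p * D * W2 * (W2 * B - C ^ 2) +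
          2 * p * (W2 - D) * (W2 * b + ω * C) ^ 2 -
          2 * p * D * E * (2 * (W2 * b + ω * C) + E) := by
        rw [hHv, hW2v, hDv, homega]
        ring
      rw [hE0, ← hΔD, ← hΔ0] at id2
      have hWB : 0 ≤ W2 * B - C ^ 2 := by linarith
      have h0 : 0 ≤ W2 ^ 2 * H := by
        rw [id2]
        have ha1 : 0 ≤ 2 * p * D * W2 * (W2 * B - C ^ 2) := by
          apply mul_nonneg (by positivity) hWB
        linarith [ha1]
      have h0' : W2 ^ 2 * 0 ≤ W2 ^ 2 * H := by rw [mul_zero]; linarith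
      linarith [le_of_mul_le_mul_left h0' (pow_pos hW2pos 2)]
  -- final assembly
  rw [ge_iff_le, hds, ← sub_nonneg]
  have h2p0 : (2 : ℝ) * p ≠ 0 := by positivity
  have hD0 : D ≠ 0 := ne_of_gt hDpos
  have hfinal : -((b + T) ^ 2 - (b ^ 2 + B)) -
      ((ν - 1) / (2 * p) * ((2 * p * b - l * η) ^ 2 / D) - η ^ 2 / (2 * p)) =
      H / (2 * p * D) := by
    rw [hHv, ← hη']
    field_simp
    ring
  have hdiv : 0 ≤ H / (2 * p * D) := div_nonneg hHnn (by positivity)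
  linarith [hfinal, hdiv]
end

section
/- Let W be a diagonal n×n matrix (n ≥ 3) with W₁₁ ≥ … ≥ W_{nn}, diagonal in Γ₂, and suppose a > 0 satisfies a ≤ √(σ₂(W)/(3(n−1)(n−2))) and σ₃(W + aI) ≥ 0. If moreover W₁₁ > 6(n−2)a, then σ₂(W) + ((n−1)(n−2)/2)a² ≥ (5/6)·σ₂^{11}(W)·W₁₁, and consequently (7/6)σ₂(W) ≥ (5/6)σ₂^{11}(W)W₁₁. -/
open Finset

section helpers

set_option linter.unusedSectionVars false

variable {ι : Type*} [DecidableEq ι]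

noncomputable def Egen (ν : ι → ℝ) (k : ℕ) (s : Finset ι) : ℝ :=
  ∑ t ∈ s.powersetCard k, ∏ i ∈ t, ν i

lemma Egen_zero (ν : ι → ℝ) (s : Finset ι) : Egen ν 0 s = 1 := by
  simp [Egen]

lemma Egen_insert (ν : ι → ℝ) (k : ℕ) {x : ι} {s : Finset ι} (h : x ∉ s) :
    Egen ν (k + 1) (insert x s) = Egen ν (k + 1) s + ν x * Egen ν k s := by
  unfold Egen
  rw [Finset.powersetCard_succ_insert h, Finset.sum_union, Finset.sum_image, Finset.mul_sum]
  · congr 1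
    refine Finset.sum_congr rfl fun t ht => ?_
    have hxt : x ∉ t := fun hx => h ((Finset.mem_powersetCard.1 ht).1 hx)
    rw [Finset.prod_insert hxt]
  · intro t ht u hu htu
    have hxt : x ∉ t := fun hx => h ((Finset.mem_powersetCard.1 ht).1 hx)
    have hxu : x ∉ u := fun hx => h ((Finset.mem_powersetCard.1 hu).1 hx)
    have := congrArg (Finset.erase · x) htu
    simpa [Finset.erase_insert hxt, Finset.erase_insert hxu] using this
  · rw [Finset.disjoint_left]
    intro t ht hti
    rcases Finset.mem_image.1 hti with ⟨u, _, rfl⟩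
    exact h ((Finset.mem_powersetCard.1 ht).1 (Finset.mem_insert_self x u))

lemma Egen_empty (ν : ι → ℝ) (k : ℕ) (hk : 0 < k) : Egen ν k (∅ : Finset ι) = 0 := by
  unfold Egen
  rw [Finset.powersetCard_eq_empty.2 (by simpa using hk), Finset.sum_empty]

lemma Egen_one (ν : ι → ℝ) (s : Finset ι) : Egen ν 1 s = ∑ i ∈ s, ν i := by
  induction s using Finset.induction_on with
  | empty => simp [Egen_empty ν 1 one_pos]
  | @insert _ _ h ih =>
      rw [show (1:ℕ) = 0 + 1 from rfl] at *
      rw [Egen_insert _ _ h, ih, Egen_zero, Finset.sum_insert h]; ring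

lemma Egen_two (ν : ι → ℝ) (s : Finset ι) :
    2 * Egen ν 2 s = (∑ i ∈ s, ν i) ^ 2 - ∑ i ∈ s, ν i ^ 2 := by
  induction s using Finset.induction_on with
  | empty => simp [Egen_empty ν 2 (by norm_num)]
  | @insert x s h ih =>
      have h2 : Egen ν 2 (insert x s) = Egen ν 2 s + ν x * Egen ν 1 s :=
        Egen_insert ν 1 h
      rw [h2, Egen_one, Finset.sum_insert h, Finset.sum_insert h]
      linear_combination ih

lemma Egen_three (ν : ι → ℝ) (s : Finset ι) :
    6 * Egen ν 3 s = (∑ i ∈ s, ν i) ^ 3 - 3 * (∑ i ∈ s, ν i) * (∑ i ∈ s, ν i ^ 2)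
      + 2 * ∑ i ∈ s, ν i ^ 3 := by
  induction s using Finset.induction_on with
  | empty => simp [Egen_empty ν 3 (by norm_num)]
  | @insert x s h ih =>
      have h3 : Egen ν 3 (insert x s) = Egen ν 3 s + ν x * Egen ν 2 s :=
        Egen_insert ν 2 h
      rw [h3, Finset.sum_insert h, Finset.sum_insert h, Finset.sum_insert h]
      linear_combination ih + 3 * ν x * Egen_two ν s

lemma key_ineq (q1 q2 q3 b x : ℝ) (hq1 : 0 < q1) (hq2 : q1 ^ 2 < q2) (hb : 0 < b)
    (hbx : b ≤ x) (hb2 : b ^ 2 ≤ q2) (hq3 : q3 ≤ b * q2) :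
    3 * x * (q1 ^ 2 - q2) + (q1 ^ 3 - 3 * q1 * q2 + 2 * q3) < 0 := by
  have hq2pos : 0 < q2 := lt_trans (by positivity) hq2
  have hx : 0 < x := lt_of_lt_of_le hb hbx
  rcases le_or_gt b q1 with hcase | hcase
  · nlinarith [mul_pos (by linarith : (0:ℝ) < 3 * x + q1) (sub_pos.2 hq2),
      mul_nonneg (sub_nonneg.2 hcase) hq2pos.le]
  · have step1 : 3 * x * (q1 ^ 2 - q2) + (q1 ^ 3 - 3 * q1 * q2 + 2 * q3) ≤
        -((b + 3 * q1) * (q2 - q1 ^ 2)) + 2 * q1 ^ 2 * (b - q1) := by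
      nlinarith [mul_nonneg (sub_nonneg.2 hbx) (sub_pos.2 hq2).le]
    have h5 : 2 * q1 ^ 2 * (b - q1) * (b + q1) < (b + 3 * q1) * (q2 - q1 ^ 2) * (b + q1) := by
      nlinarith [mul_nonneg (mul_nonneg (by norm_num : (0:ℝ) ≤ 2) (sq_nonneg q1))
          (sub_nonneg.2 hb2),
        mul_pos (sub_pos.2 hq2)
          (by positivity : (0:ℝ) < b ^ 2 + 4 * b * q1 + q1 ^ 2)]
    have h6 : 2 * q1 ^ 2 * (b - q1) < (b + 3 * q1) * (q2 - q1 ^ 2) :=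
      (mul_lt_mul_iff_of_pos_right (add_pos hb hq1)).1 h5
    linarith

end helpers

lemma esym_eq_Egen (n k : ℕ) (lam : Fin n → ℝ) : esym n k lam = Egen lam k Finset.univ := rfl

set_option maxHeartbeats 1000000 in
theorem guan_lemma_first {n : ℕ} (hn : 3 ≤ n) (lam : Fin n → ℝ) (hord : Antitone lam)
    (hG : GammaTwo n lam) (a : ℝ) (ha : 0 < a)
    (ha2 : a ≤ Real.sqrt (esym n 2 lam / (3 * ((n : ℝ) - 1) * ((n : ℝ) - 2))))
    (h3 : esym n 3 (fun i => lam i + a) ≥ 0)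
    (h11 : lam ⟨0, by omega⟩ > 6 * ((n : ℝ) - 2) * a) :
    esym n 2 lam + ((n : ℝ) - 1) * ((n : ℝ) - 2) / 2 * a ^ 2 ≥
        5 / 6 * (esym n 1 lam - lam ⟨0, by omega⟩) * lam ⟨0, by omega⟩ ∧
      7 / 6 * esym n 2 lam ≥
        5 / 6 * (esym n 1 lam - lam ⟨0, by omega⟩) * lam ⟨0, by omega⟩ := by
  have hn3 : (3 : ℝ) ≤ (n : ℝ) := by exact_mod_cast hn
  have hn1 : (0 : ℝ) < (n : ℝ) - 1 := by linarith
  have hn2 : (0 : ℝ) < (n : ℝ) - 2 := by linarith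
  set i0 : Fin n := ⟨0, by omega⟩ with hi0
  set i1 : Fin n := ⟨1, by omega⟩ with hi1
  set μ : Fin n → ℝ := fun i => lam i + a with hμ
  set p1 : ℝ := ∑ i, lam i with hp1
  set p2 : ℝ := ∑ i, lam i ^ 2 with hp2
  set t : Finset (Fin n) := Finset.univ.erase i0 with ht
  set q1 : ℝ := ∑ i ∈ t, μ i with hq1
  set q2 : ℝ := ∑ i ∈ t, μ i ^ 2 with hq2
  set q3 : ℝ := ∑ i ∈ t, μ i ^ 3 with hq3
  have hcardt : (t.card : ℝ) = (n : ℝ) - 1 := by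
    rw [ht, Finset.card_erase_of_mem (Finset.mem_univ _), Finset.card_univ, Fintype.card_fin]
    have h1n : 1 ≤ n := by omega
    push_cast [Nat.cast_sub h1n]
    ring
  -- esym in terms of power sums
  have he1 : esym n 1 lam = p1 := by
    rw [esym_eq_Egen, Egen_one]
  have he2 : 2 * esym n 2 lam = p1 ^ 2 - p2 := by
    rw [esym_eq_Egen, Egen_two]
  -- basic positivity facts
  have hp1pos : 0 < p1 := by
    have := hG.1; rw [he1] at this; exact this
  have hp2lt : p2 < p1 ^ 2 := by linarith [hG.2, he2]
  have hmax : ∀ i : Fin n, lam i ≤ lam i0 := fun i => hord (by simp [hi0, Fin.le_def])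
  have hlam0sq : lam i0 ^ 2 ≤ p2 :=
    Finset.single_le_sum (fun i _ => sq_nonneg (lam i)) (Finset.mem_univ i0)
  have hlam0pos : 0 < lam i0 := by
    have hsum : p1 ≤ (n : ℝ) * lam i0 := by
      rw [hp1]
      calc ∑ i, lam i ≤ ∑ _i : Fin n, lam i0 := Finset.sum_le_sum fun i _ => hmax i
        _ = (n : ℝ) * lam i0 := by
            rw [Finset.sum_const, nsmul_eq_mul, Finset.card_univ, Fintype.card_fin]
    by_contra hcon
    push_neg at hcon
    have : (n : ℝ) * lam i0 ≤ 0 :=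
      mul_nonpos_iff.2 (Or.inl ⟨by linarith, hcon⟩)
    linarith
  have hS1pos : 0 < p1 - lam i0 := by nlinarith [hlam0sq, hp2lt, hlam0pos, hp1pos]
  -- splitting sums
  have hlam_split1 : ∑ i ∈ t, lam i = p1 - lam i0 := by
    have h := Finset.add_sum_erase Finset.univ lam (Finset.mem_univ i0)
    rw [ht, hp1]; linarith [h]
  have hlam_split2 : ∑ i ∈ t, lam i ^ 2 = p2 - lam i0 ^ 2 := by
    have h := Finset.add_sum_erase Finset.univ (fun i => lam i ^ 2) (Finset.mem_univ i0)
    rw [ht, hp2]; linarith [h]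
  have hq1eq : q1 = (p1 - lam i0) + ((n : ℝ) - 1) * a := by
    rw [hq1]
    have h : ∑ i ∈ t, μ i = ∑ i ∈ t, lam i + ∑ _i ∈ t, a := by
      rw [← Finset.sum_add_distrib]
    rw [h, hlam_split1, Finset.sum_const, nsmul_eq_mul, hcardt]
  have hq2eq : q2 = (p2 - lam i0 ^ 2) + 2 * a * (p1 - lam i0) + ((n : ℝ) - 1) * a ^ 2 := by
    rw [hq2]
    have h : ∑ i ∈ t, μ i ^ 2 =
        ∑ i ∈ t, lam i ^ 2 + (2 * a * ∑ i ∈ t, lam i + ∑ _i ∈ t, a ^ 2) := by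
      rw [Finset.mul_sum, ← Finset.sum_add_distrib, ← Finset.sum_add_distrib]
      exact Finset.sum_congr rfl fun i _ => by rw [hμ]; ring
    rw [h, hlam_split2, hlam_split1, Finset.sum_const, nsmul_eq_mul, hcardt]
    ring
  have hq1pos : 0 < q1 := by
    rw [hq1eq]
    have := mul_pos hn1 ha
    linarith
  -- tail bounds via second-largest entry
  have hi1mem : i1 ∈ t := by
    rw [ht]
    exact Finset.mem_erase.2 ⟨by simp [hi0, hi1, Fin.ext_iff], Finset.mem_univ _⟩
  have htail_le : ∀ i ∈ t, μ i ≤ μ i1 := by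
    intro i hi
    have hne : i ≠ i0 := by
      rw [ht] at hi; exact (Finset.mem_erase.1 hi).1
    have h1le : i1 ≤ i := by
      rw [hi1, Fin.le_def]
      have hv : i.val ≠ 0 := fun h => hne (by rw [hi0]; exact Fin.ext h)
      exact Nat.one_le_iff_ne_zero.2 hv
    have := hord h1le
    rw [hμ]; dsimp only; linarith
  have hbx : μ i1 ≤ μ i0 := by
    have := hmax i1
    rw [hμ]; dsimp only; linarith
  have hbpos : 0 < μ i1 := by
    have hsum : q1 ≤ ((n : ℝ) - 1) * μ i1 := by
      rw [hq1]
      calc ∑ i ∈ t, μ i ≤ ∑ _i ∈ t, μ i1 := Finset.sum_le_sum htail_le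
        _ = ((n : ℝ) - 1) * μ i1 := by rw [Finset.sum_const, nsmul_eq_mul, hcardt]
    by_contra hcon
    push_neg at hcon
    have : ((n : ℝ) - 1) * μ i1 ≤ 0 := mul_nonpos_iff.2 (Or.inl ⟨hn1.le, hcon⟩)
    linarith
  have hb2 : μ i1 ^ 2 ≤ q2 := by
    rw [hq2]
    exact Finset.single_le_sum (fun i _ => sq_nonneg (μ i)) hi1mem
  have hq3le : q3 ≤ μ i1 * q2 := by
    rw [hq3, hq2, Finset.mul_sum]
    refine Finset.sum_le_sum fun i hi => ?_
    nlinarith [mul_nonneg (sub_nonneg.2 (htail_le i hi)) (sq_nonneg (μ i))]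
  have hμ0pos : 0 < μ i0 := by rw [hμ]; dsimp only; linarith
  -- from σ₃(λ+a) ≥ 0
  have hsplit1 : ∑ i, μ i = μ i0 + q1 := by
    rw [hq1, ht]; exact (Finset.add_sum_erase _ _ (Finset.mem_univ i0)).symm
  have hsplit2 : ∑ i, μ i ^ 2 = μ i0 ^ 2 + q2 := by
    rw [hq2, ht]; exact (Finset.add_sum_erase _ (fun i => μ i ^ 2) (Finset.mem_univ i0)).symm
  have hsplit3 : ∑ i, μ i ^ 3 = μ i0 ^ 3 + q3 := by
    rw [hq3, ht]; exact (Finset.add_sum_erase _ (fun i => μ i ^ 3) (Finset.mem_univ i0)).symm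
  have h3' : 0 ≤ 3 * μ i0 * (q1 ^ 2 - q2) + (q1 ^ 3 - 3 * q1 * q2 + 2 * q3) := by
    have h6 : 0 ≤ 6 * esym n 3 μ := by linarith [h3]
    rw [esym_eq_Egen, Egen_three, hsplit1, hsplit2, hsplit3] at h6
    have hid : (μ i0 + q1) ^ 3 - 3 * (μ i0 + q1) * (μ i0 ^ 2 + q2) + 2 * (μ i0 ^ 3 + q3) =
        3 * μ i0 * (q1 ^ 2 - q2) + (q1 ^ 3 - 3 * q1 * q2 + 2 * q3) := by ring
    rw [hid] at h6
    exact h6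
  have hq2le : q2 ≤ q1 ^ 2 := by
    by_contra hcon
    push_neg at hcon
    exact absurd h3'
      (not_le.2 (key_ineq q1 q2 q3 (μ i1) (μ i0) hq1pos hcon hbpos hbx hb2 hq3le))
  -- first inequality
  have key1 : 0 ≤ ((p1 - lam i0) + ((n : ℝ) - 1) * a) ^ 2 -
      ((p2 - lam i0 ^ 2) + 2 * a * (p1 - lam i0) + ((n : ℝ) - 1) * a ^ 2) := by
    rw [← hq1eq, ← hq2eq]; linarith
  have hprod : 0 ≤ (p1 - lam i0) * (lam i0 - 6 * ((n : ℝ) - 2) * a) :=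
    mul_nonneg hS1pos.le (by linarith [h11])
  have he2' : esym n 2 lam = (p1 ^ 2 - p2) / 2 := by linarith
  have first : esym n 2 lam + ((n : ℝ) - 1) * ((n : ℝ) - 2) / 2 * a ^ 2 ≥
      5 / 6 * (esym n 1 lam - lam i0) * lam i0 := by
    rw [he1, he2']
    linarith [key1, hprod]
  -- second inequality
  have hdenpos : 0 < 3 * ((n : ℝ) - 1) * ((n : ℝ) - 2) :=
    mul_pos (mul_pos (by norm_num) hn1) hn2
  have hXpos : 0 < esym n 2 lam / (3 * ((n : ℝ) - 1) * ((n : ℝ) - 2)) :=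
    div_pos hG.2 hdenpos
  have ha2' : a ^ 2 ≤ esym n 2 lam / (3 * ((n : ℝ) - 1) * ((n : ℝ) - 2)) := by
    have h := pow_le_pow_left₀ ha.le ha2 2
    rwa [Real.sq_sqrt hXpos.le] at h
  have ha2'' : a ^ 2 * (3 * ((n : ℝ) - 1) * ((n : ℝ) - 2)) ≤ esym n 2 lam :=
    (le_div_iff₀ hdenpos).1 ha2'
  have second : 7 / 6 * esym n 2 lam ≥ 5 / 6 * (esym n 1 lam - lam i0) * lam i0 := by
    linarith [first, ha2'']
  exact ⟨first, second⟩
end
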